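/- arXiv:2010.10760 — 2 statements merged into one kernel-verified Lean document; each statement's English description precedes it below -/
import Mathlib

section
/- Corollary 2.2 (IF estimate, Gaussian window). Fix t ∈ ℝ. Let x ∈ 𝓑_{ε1,ε2} and let g be the Gaussian window g(τ) = (1/√(2π)) e^{−τ²/2} (so ĝ(ξ) = e^{−2π²ξ²}). Suppose the separation condition σ(t) ≥ 2α/(φ'_k(t) − φ'_{k−1}(t)) holds for all t and k = 1,…,K, 2M(t)(τ0 + λ_0(t)) ≤ μ(t), ε̃1 satisfies M(t)(τ0 + λ_0(t)) ≤ ε̃1 ≤ μ(t) − M(t)(τ0 + λ_0(t)), and err_ℓ(t) < A_ℓ(t)/4. Then for each ℓ = 1,…,K, |η̂_ℓ(t) − φ'_ℓ(t)| < (√2/(σ(t)π)) · √(err_ℓ(t)/A_ℓ(t)). -/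
open MeasureTheory Real

noncomputable section

/-- The adaptive short-time Fourier transform with time-varying window width `σ`. -/
def aSTFT (x : ℝ → ℂ) (g : ℝ → ℝ) (σ : ℝ → ℝ) (t η : ℝ) : ℂ :=
  ∫ τ : ℝ, x (t + τ) * (((σ t)⁻¹ * g (τ / σ t) : ℝ) : ℂ) *
    Complex.exp (-(2 * (π : ℂ) * η * τ) * Complex.I)

/-- The Fourier transform `ĝ` of the window `g`. -/
def hatg (g : ℝ → ℝ) (ξ : ℝ) : ℂ :=
  ∫ τ : ℝ, (g τ : ℂ) * Complex.exp (-(2 * (π : ℂ) * ξ * τ) * Complex.I)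

/-- The absolute moments `I_n = ∫ |τ^n g(τ)| dτ` of the window. -/
def momentI (g : ℝ → ℝ) (n : ℕ) : ℝ := ∫ τ : ℝ, |τ| ^ n * |g τ|

/-- The `k`-th component `x_k(s) = A_k(s) e^{2πi φ_k(s)}`. -/
def xcomp (A φ : ℕ → ℝ → ℝ) (k : ℕ) (s : ℝ) : ℂ :=
  (A k s : ℂ) * Complex.exp ((2 * (π : ℂ) * φ k s) * Complex.I)

/-- `M(t) = Σ_{k=0}^K A_k(t)`. -/
def Msum (K : ℕ) (A : ℕ → ℝ → ℝ) (t : ℝ) : ℝ := ∑ k ∈ Finset.range (K + 1), A k t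

/-- `μ(t) = min_{0 ≤ k ≤ K} A_k(t)`. -/
def muMin (K : ℕ) (A : ℕ → ℝ → ℝ) (t : ℝ) : ℝ :=
  (Finset.range (K + 1)).inf' (by simp) fun k => A k t

/-- `λ_0(t) = ε1 I_1 σ(t) + π ε2 I_2 σ(t)²`. -/
def lam0 (g : ℝ → ℝ) (σ : ℝ → ℝ) (ε1 ε2 t : ℝ) : ℝ :=
  ε1 * momentI g 1 * σ t + π * ε2 * momentI g 2 * σ t ^ 2

/-- `err_ℓ(t) = M(t)λ_0(t) + Σ_{k≠ℓ} A_k(t) |ĝ(α(2|ℓ−k|−1))|`. -/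
def errl (K : ℕ) (A : ℕ → ℝ → ℝ) (g : ℝ → ℝ) (σ : ℝ → ℝ) (α ε1 ε2 : ℝ)
    (l : ℕ) (t : ℝ) : ℝ :=
  Msum K A t * lam0 g σ ε1 ε2 t +
    ∑ k ∈ (Finset.range (K + 1)).erase l,
      A k t * ‖hatg g (α * (2 * |(l : ℝ) - (k : ℝ)| - 1))‖

/-- `𝓖_t = {η : |Ṽ_x(t,η)| > ε̃1}`. -/
def Gt (x : ℝ → ℂ) (g : ℝ → ℝ) (σ : ℝ → ℝ) (t eps : ℝ) : Set ℝ :=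
  {η | eps < ‖aSTFT x g σ t η‖}

/-- `𝓖_{t,k} = {η ∈ 𝓖_t : |η − φ'_k(t)| < α/σ(t)}`. -/
def Gtk (x : ℝ → ℂ) (g : ℝ → ℝ) (σ : ℝ → ℝ) (φ : ℕ → ℝ → ℝ) (α t eps : ℝ)
    (k : ℕ) : Set ℝ :=
  {η | η ∈ Gt x g σ t eps ∧ |η - deriv (φ k) t| < α / σ t}

/-- The Gaussian-window version of `err_ℓ(t)`. -/
def errG (K : ℕ) (A : ℕ → ℝ → ℝ) (g : ℝ → ℝ) (σ : ℝ → ℝ) (α ε1 ε2 : ℝ)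
    (l : ℕ) (t : ℝ) : ℝ :=
  ε1 * momentI g 1 * σ t * Msum K A t + π * ε2 * momentI g 2 * σ t ^ 2 * Msum K A t +
    ∑ k ∈ (Finset.range (K + 1)).erase l,
      A k t * Real.exp (-(2 * π ^ 2 * (α * (2 * |(l : ℝ) - (k : ℝ)| - 1)) ^ 2))

/-!
Near `φ'_ℓ(t)` the modulus of the adaptive STFT is, up to `err_ℓ(t)`, the Gaussian bump
`A_ℓ(t) e^{-2π²σ(t)²(η - φ'_ℓ(t))²}`. Freezing the amplitude of the `k`-th component at `t` and
replacing its phase by the tangent line costs at most `A_k(t) λ_0(t)` (Lipschitz amplitude, Taylor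
bound for the phase, `|e^{ia} - e^{ib}| ≤ |a - b|`). The STFT of the resulting pure tone is
`A_k(t) e^{2πiφ_k(t)} ĝ(σ(t)(η - φ'_k(t)))`, and for `|η - φ'_ℓ(t)| ≤ α/σ(t)` the separation
condition gives `σ(t)|η - φ'_k(t)| ≥ α(2|ℓ-k|-1)`, so the other tones contribute at most the
remaining terms of `err_ℓ(t)`.

Since `φ'_ℓ(t)` itself belongs to `𝓖_{t,ℓ}`, the maximiser satisfies
`A_ℓ - err_ℓ ≤ A_ℓ e^{-X} + err_ℓ` with `X = 2π²σ(t)²(η̂_ℓ - φ'_ℓ(t))²`; as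
`1 - e^{-X} ≥ X/(1+X)` and `err_ℓ < A_ℓ/4`, this forces `X < 1` and then `X A_ℓ < 4 err_ℓ`.
-/

open ProbabilityTheory

def expTwoPiI (θ : ℝ) : ℂ := Complex.exp (2 * π * θ * Complex.I)

lemma expTwoPiI_eq_exp_ofReal_mul_I (θ : ℝ) :
    expTwoPiI θ = Complex.exp (↑(2 * π * θ) * Complex.I) := by
  simp [expTwoPiI]

@[simp] lemma norm_expTwoPiI (θ : ℝ) : ‖expTwoPiI θ‖ = 1 := by
  rw [expTwoPiI_eq_exp_ofReal_mul_I, Complex.norm_exp_ofReal_mul_I]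

lemma expTwoPiI_add (a b : ℝ) : expTwoPiI (a + b) = expTwoPiI a * expTwoPiI b := by
  simp only [expTwoPiI, ← Complex.exp_add]
  push_cast
  ring_nf

lemma norm_expTwoPiI_sub_expTwoPiI_le (a b : ℝ) :
    ‖expTwoPiI a - expTwoPiI b‖ ≤ 2 * π * |a - b| := by
  have h : expTwoPiI a - expTwoPiI b =
      expTwoPiI b * (Complex.exp (Complex.I * ↑(2 * π * (a - b))) - 1) := by
    rw [mul_sub, mul_one, mul_comm Complex.I, ← expTwoPiI_eq_exp_ofReal_mul_I, ← expTwoPiI_add,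
      add_sub_cancel]
  rw [h, norm_mul, norm_expTwoPiI, one_mul]
  refine Real.norm_exp_I_mul_ofReal_sub_one_le.trans_eq ?_
  rw [Real.norm_eq_abs, abs_mul, abs_of_pos (by positivity : (0:ℝ) < 2 * π)]

@[fun_prop] lemma continuous_expTwoPiI : Continuous expTwoPiI := by
  unfold expTwoPiI; fun_prop

theorem abs_sub_sub_deriv_mul_le {f : ℝ → ℝ} (hf : ContDiff ℝ 2 f) {ε : ℝ}
    (hε : ∀ u, |deriv (deriv f) u| ≤ ε) (t τ : ℝ) :
    |f (t + τ) - f t - deriv f t * τ| ≤ ε * τ ^ 2 / 2 := by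
  rcases eq_or_ne τ 0 with rfl | hτ
  · simp
  have htτ : t ≠ t + τ := by simpa using hτ
  obtain ⟨u, -, hu⟩ := taylor_mean_remainder_lagrange_iteratedDeriv (n := 1) htτ hf.contDiffOn
  rw [taylorWithinEval_succ, taylor_within_zero_eval, iteratedDerivWithin_one,
    (hf.differentiable (by norm_num) t).derivWithin
      (uniqueDiffOn_uIcc htτ t Set.left_mem_uIcc), iteratedDeriv_succ, iteratedDeriv_one] at hu
  norm_num at hu
  rw [show f (t + τ) - f t - deriv f t * τ = deriv (deriv f) u * τ ^ 2 / 2 by linarith, abs_div,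
    abs_mul, abs_of_nonneg (sq_nonneg τ), abs_two]
  gcongr
  exact hε u

lemma integral_abs_pow_mul_abs_scaled (g : ℝ → ℝ) {s : ℝ} (hs : 0 < s) (n : ℕ) :
    ∫ τ, |τ| ^ n * |s⁻¹ * g (τ / s)| = s ^ n * momentI g n := by
  have h : ∀ τ, |τ| ^ n * |s⁻¹ * g (τ / s)| = s ^ n * s⁻¹ * (|τ / s| ^ n * |g (τ / s)|) := by
    intro τ
    rw [abs_mul, abs_div, abs_inv, abs_of_pos hs, div_pow]
    field_simp
  simp_rw [h]
  rw [integral_const_mul, Measure.integral_comp_div (fun u => |u| ^ n * |g u|), abs_of_pos hs,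
    smul_eq_mul, momentI]
  field_simp

lemma integrable_abs_pow_mul_abs_scaled {g : ℝ → ℝ} {s : ℝ} (hs : 0 < s) {n : ℕ}
    (hg : Integrable fun τ => |τ| ^ n * |g τ|) :
    Integrable fun τ => |τ| ^ n * |s⁻¹ * g (τ / s)| := by
  refine ((hg.comp_div hs.ne').const_mul (s ^ n * s⁻¹)).congr (ae_of_all _ fun τ => ?_)
  simp only [abs_mul, abs_div, abs_inv, abs_of_pos hs, div_pow]
  field_simp

lemma momentI_nonneg (g : ℝ → ℝ) (n : ℕ) : 0 ≤ momentI g n :=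
  integral_nonneg fun τ => by positivity

def aSTFTIntegrand (x : ℝ → ℂ) (g : ℝ → ℝ) (σ : ℝ → ℝ) (t η τ : ℝ) : ℂ :=
  x (t + τ) * (((σ t)⁻¹ * g (τ / σ t) : ℝ) : ℂ) * Complex.exp (-(2 * (π : ℂ) * η * τ) * Complex.I)

lemma aSTFT_eq_integral (x : ℝ → ℂ) (g : ℝ → ℝ) (σ : ℝ → ℝ) (t η : ℝ) :
    aSTFT x g σ t η = ∫ τ, aSTFTIntegrand x g σ t η τ := rfl

lemma aSTFTIntegrand_eq (x : ℝ → ℂ) (g : ℝ → ℝ) (σ : ℝ → ℝ) (t η τ : ℝ) :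
    aSTFTIntegrand x g σ t η τ =
      x (t + τ) * (((σ t)⁻¹ * g (τ / σ t) : ℝ) : ℂ) * expTwoPiI (-(η * τ)) := by
  simp only [aSTFTIntegrand, expTwoPiI]
  push_cast
  ring_nf

lemma norm_aSTFTIntegrand (x : ℝ → ℂ) (g : ℝ → ℝ) (σ : ℝ → ℝ) (t η τ : ℝ) :
    ‖aSTFTIntegrand x g σ t η τ‖ = ‖x (t + τ)‖ * |(σ t)⁻¹ * g (τ / σ t)| := by
  rw [aSTFTIntegrand_eq, norm_mul, norm_mul, norm_expTwoPiI, mul_one, Complex.norm_real,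
    Real.norm_eq_abs]

lemma norm_aSTFT_le (x : ℝ → ℂ) (g : ℝ → ℝ) (σ : ℝ → ℝ) (t η : ℝ) :
    ‖aSTFT x g σ t η‖ ≤ ∫ τ, ‖x (t + τ)‖ * |(σ t)⁻¹ * g (τ / σ t)| := by
  rw [aSTFT_eq_integral]
  simpa only [norm_aSTFTIntegrand] using norm_integral_le_integral_norm (aSTFTIntegrand x g σ t η)

lemma continuous_aSTFTIntegrand {x : ℝ → ℂ} {g : ℝ → ℝ} (hx : Continuous x) (hg : Continuous g)
    (σ : ℝ → ℝ) (t η : ℝ) : Continuous (aSTFTIntegrand x g σ t η) := by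
  unfold aSTFTIntegrand; fun_prop

lemma integrable_aSTFTIntegrand {x : ℝ → ℂ} {g : ℝ → ℝ} {σ : ℝ → ℝ} {t C₀ C₁ : ℝ}
    (hx : Continuous x) (hg : Continuous g) (hmom : ∀ n ≤ 1, Integrable fun τ => |τ| ^ n * |g τ|)
    (hσ : 0 < σ t) (hbound : ∀ τ, ‖x (t + τ)‖ ≤ C₀ + C₁ * |τ|) (η : ℝ) :
    Integrable (aSTFTIntegrand x g σ t η) := by
  have h₀ := integrable_abs_pow_mul_abs_scaled hσ (hmom 0 (by norm_num))
  have h₁ := integrable_abs_pow_mul_abs_scaled hσ (hmom 1 le_rfl)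
  refine Integrable.mono' ((h₀.const_mul C₀).add (h₁.const_mul C₁))
    (continuous_aSTFTIntegrand hx hg σ t η).aestronglyMeasurable (ae_of_all _ fun τ => ?_)
  rw [norm_aSTFTIntegrand]
  simp only [Pi.add_apply, pow_zero, one_mul, pow_one]
  nlinarith [hbound τ, abs_nonneg ((σ t)⁻¹ * g (τ / σ t))]

lemma aSTFT_sub {x y : ℝ → ℂ} {g : ℝ → ℝ} {σ : ℝ → ℝ} {t η : ℝ}
    (hx : Integrable (aSTFTIntegrand x g σ t η)) (hy : Integrable (aSTFTIntegrand y g σ t η)) :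
    aSTFT x g σ t η - aSTFT y g σ t η = aSTFT (x - y) g σ t η := by
  simp only [aSTFT_eq_integral]
  rw [← integral_sub hx hy]
  simp only [aSTFTIntegrand, Pi.sub_apply, sub_mul]

lemma aSTFT_finset_sum {ι : Type*} (S : Finset ι) {x : ι → ℝ → ℂ} {g : ℝ → ℝ} {σ : ℝ → ℝ}
    {t η : ℝ} (hx : ∀ k ∈ S, Integrable (aSTFTIntegrand (x k) g σ t η)) :
    aSTFT (fun s => ∑ k ∈ S, x k s) g σ t η = ∑ k ∈ S, aSTFT (x k) g σ t η := by
  simp only [aSTFT_eq_integral]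
  rw [← integral_finsetSum S hx]
  simp only [aSTFTIntegrand, Finset.sum_mul]

lemma hatg_eq_integral_expTwoPiI (g : ℝ → ℝ) (ξ : ℝ) :
    hatg g ξ = ∫ τ, (g τ : ℂ) * expTwoPiI (-(ξ * τ)) := by
  simp only [hatg, expTwoPiI]
  congr 1
  ext τ
  push_cast
  ring_nf

lemma aSTFT_tone (g : ℝ → ℝ) {σ : ℝ → ℝ} {t : ℝ} (hσ : 0 < σ t) (a θ b η : ℝ) :
    aSTFT (fun s => a * expTwoPiI (θ + b * (s - t))) g σ t η =
      a * expTwoPiI θ * hatg g (σ t * (η - b)) := by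
  set f : ℝ → ℂ := fun u => (g u : ℂ) * expTwoPiI (-(σ t * (η - b) * u))
  have h : ∀ τ, aSTFTIntegrand (fun s => a * expTwoPiI (θ + b * (s - t))) g σ t η τ =
      (a * expTwoPiI θ * (σ t : ℂ)⁻¹) * f (τ / σ t) := by
    intro τ
    have hph : expTwoPiI (θ + b * τ) * expTwoPiI (-(η * τ)) =
        expTwoPiI θ * expTwoPiI (-((η - b) * τ)) := by
      rw [← expTwoPiI_add, ← expTwoPiI_add]
      ring_nf
    simp only [f]
    rw [aSTFTIntegrand_eq, add_sub_cancel_left, mul_comm (σ t), mul_assoc (η - b),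
      mul_div_cancel₀ τ hσ.ne']
    push_cast
    linear_combination (a * ((σ t : ℂ)⁻¹ * g (τ / σ t))) * hph
  rw [aSTFT_eq_integral, funext h, integral_const_mul, Measure.integral_comp_div f,
    hatg_eq_integral_expTwoPiI, abs_of_pos hσ, Complex.real_smul]
  have : (σ t : ℂ) ≠ 0 := by exact_mod_cast hσ.ne'
  field_simp
  rfl

lemma norm_amFM_sub_tone_le {a φ : ℝ → ℝ} {t τ b ε₁ ε₂ : ℝ} (ha₀ : 0 ≤ a t)
    (hlip : |a (t + τ) - a t| ≤ ε₁ * |τ| * a t)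
    (htaylor : |φ (t + τ) - φ t - b * τ| ≤ ε₂ * τ ^ 2 / 2) :
    ‖a (t + τ) * expTwoPiI (φ (t + τ)) - a t * expTwoPiI (φ t + b * τ)‖ ≤
      (ε₁ * |τ| + π * ε₂ * τ ^ 2) * a t := by
  have hsplit : (a (t + τ) : ℂ) * expTwoPiI (φ (t + τ)) - a t * expTwoPiI (φ t + b * τ) =
      ((a (t + τ) - a t : ℝ) : ℂ) * expTwoPiI (φ (t + τ)) +
        (a t : ℂ) * (expTwoPiI (φ (t + τ)) - expTwoPiI (φ t + b * τ)) := by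
    push_cast; ring
  have hexp : ‖expTwoPiI (φ (t + τ)) - expTwoPiI (φ t + b * τ)‖ ≤ π * ε₂ * τ ^ 2 := by
    refine (norm_expTwoPiI_sub_expTwoPiI_le _ _).trans ?_
    rw [sub_add_eq_sub_sub]
    nlinarith [pi_pos]
  rw [hsplit]
  refine (norm_add_le _ _).trans ?_
  rw [norm_mul, norm_mul, norm_expTwoPiI, mul_one, Complex.norm_real, Complex.norm_real,
    Real.norm_eq_abs, Real.norm_eq_abs, abs_of_nonneg ha₀]
  nlinarith [mul_le_mul_of_nonneg_left hexp ha₀]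

lemma integrable_aSTFTIntegrand_amFM {a φ g σ : ℝ → ℝ} {t ε₁ : ℝ}
    (ha : Continuous a) (hφ : Continuous φ) (hg : Continuous g)
    (hmom : ∀ n ≤ 2, Integrable fun τ => |τ| ^ n * |g τ|) (hσ : 0 < σ t) (ha₀ : 0 ≤ a t)
    (hlip : ∀ τ, |a (t + τ) - a t| ≤ ε₁ * |τ| * a t) (η : ℝ) :
    Integrable (aSTFTIntegrand (fun s => a s * expTwoPiI (φ s)) g σ t η) := by
  refine integrable_aSTFTIntegrand (C₀ := a t) (C₁ := ε₁ * a t) (by fun_prop) hg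
    (fun n hn => hmom n (by omega)) hσ (fun τ => ?_) η
  rw [norm_mul, norm_expTwoPiI, mul_one, Complex.norm_real, Real.norm_eq_abs]
  linarith [abs_sub_abs_le_abs_sub (a (t + τ)) (a t), hlip τ, abs_of_nonneg ha₀]

theorem norm_aSTFT_amFM_sub_aSTFT_tone_le {a φ g σ : ℝ → ℝ} {t b ε₁ ε₂ : ℝ}
    (ha : Continuous a) (hφ : Continuous φ) (hg : Continuous g)
    (hmom : ∀ n ≤ 2, Integrable fun τ => |τ| ^ n * |g τ|) (hσ : 0 < σ t) (ha₀ : 0 ≤ a t)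
    (hlip : ∀ τ, |a (t + τ) - a t| ≤ ε₁ * |τ| * a t)
    (htaylor : ∀ τ, |φ (t + τ) - φ t - b * τ| ≤ ε₂ * τ ^ 2 / 2) (η : ℝ) :
    ‖aSTFT (fun s => a s * expTwoPiI (φ s)) g σ t η -
        aSTFT (fun s => a t * expTwoPiI (φ t + b * (s - t))) g σ t η‖ ≤ a t * lam0 g σ ε₁ ε₂ t := by
  have hx := integrable_aSTFTIntegrand_amFM ha hφ hg hmom hσ ha₀ hlip η
  have hy := integrable_aSTFTIntegrand (x := fun s => a t * expTwoPiI (φ t + b * (s - t)))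
    (C₀ := a t) (C₁ := 0) (by fun_prop) hg (fun n hn => hmom n (by omega)) hσ
    (fun τ => by simp [abs_of_nonneg ha₀]) η
  have hw : ∀ n ≤ 2, Integrable fun τ => |τ| ^ n * |(σ t)⁻¹ * g (τ / σ t)| :=
    fun n hn => integrable_abs_pow_mul_abs_scaled hσ (hmom n hn)
  rw [aSTFT_sub hx hy]
  refine (norm_aSTFT_le _ _ _ _ _).trans ?_
  calc ∫ τ, ‖(fun s => a s * expTwoPiI (φ s) - a t * expTwoPiI (φ t + b * (s - t))) (t + τ)‖ *
          |(σ t)⁻¹ * g (τ / σ t)|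
      ≤ ∫ τ, ε₁ * a t * (|τ| ^ 1 * |(σ t)⁻¹ * g (τ / σ t)|) +
          π * ε₂ * a t * (|τ| ^ 2 * |(σ t)⁻¹ * g (τ / σ t)|) := by
        refine integral_mono_of_nonneg (ae_of_all _ fun τ => by positivity)
          (((hw 1 (by norm_num)).const_mul _).add ((hw 2 le_rfl).const_mul _))
          (ae_of_all _ fun τ => ?_)
        simp only [add_sub_cancel_left]
        rw [pow_one, sq_abs]
        nlinarith [norm_amFM_sub_tone_le (b := b) ha₀ (hlip τ) (htaylor τ),
          abs_nonneg ((σ t)⁻¹ * g (τ / σ t))]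
    _ = a t * lam0 g σ ε₁ ε₂ t := by
        rw [integral_add ((hw 1 (by norm_num)).const_mul _) ((hw 2 le_rfl).const_mul _),
          integral_const_mul, integral_const_mul, integral_abs_pow_mul_abs_scaled g hσ,
          integral_abs_pow_mul_abs_scaled g hσ, lam0]
        ring

theorem norm_aSTFT_sub_tone_le {K : ℕ} {A φ : ℕ → ℝ → ℝ} {x : ℝ → ℂ} {g σ : ℝ → ℝ}
    {b : ℕ → ℝ} {t ε₁ ε₂ : ℝ} {l : ℕ} (hl : l ≤ K)
    (hx : ∀ s, x s = ∑ k ∈ Finset.range (K + 1), xcomp A φ k s)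
    (hA : ∀ k ≤ K, Continuous (A k)) (hφ : ∀ k ≤ K, Continuous (φ k)) (hg : Continuous g)
    (hmom : ∀ n ≤ 2, Integrable fun τ => |τ| ^ n * |g τ|) (hσ : 0 < σ t)
    (hA₀ : ∀ k ≤ K, 0 ≤ A k t) (hlip : ∀ k ≤ K, ∀ τ, |A k (t + τ) - A k t| ≤ ε₁ * |τ| * A k t)
    (htaylor : ∀ k ≤ K, ∀ τ, |φ k (t + τ) - φ k t - b k * τ| ≤ ε₂ * τ ^ 2 / 2) (η : ℝ) :
    ‖aSTFT x g σ t η - A l t * expTwoPiI (φ l t) * hatg g (σ t * (η - b l))‖ ≤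
      Msum K A t * lam0 g σ ε₁ ε₂ t +
        ∑ k ∈ (Finset.range (K + 1)).erase l, A k t * ‖hatg g (σ t * (η - b k))‖ := by
  set main : ℕ → ℂ := fun k => A k t * expTwoPiI (φ k t) * hatg g (σ t * (η - b k))
  have hcomp : ∀ k ∈ Finset.range (K + 1),
      ‖aSTFT (xcomp A φ k) g σ t η - main k‖ ≤ A k t * lam0 g σ ε₁ ε₂ t := by
    intro k hk
    have hk := Finset.mem_range_succ_iff.mp hk
    rw [show main k = _ from (aSTFT_tone g hσ (A k t) (φ k t) (b k) η).symm]
    exact norm_aSTFT_amFM_sub_aSTFT_tone_le (hA k hk) (hφ k hk) hg hmom hσ (hA₀ k hk)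
      (hlip k hk) (htaylor k hk) η
  have hsum : aSTFT x g σ t η = ∑ k ∈ Finset.range (K + 1), aSTFT (xcomp A φ k) g σ t η := by
    rw [funext hx]
    refine aSTFT_finset_sum _ fun k hk => ?_
    have hk := Finset.mem_range_succ_iff.mp hk
    exact integrable_aSTFTIntegrand_amFM (hA k hk) (hφ k hk) hg hmom hσ (hA₀ k hk) (hlip k hk) η
  have hsplit : aSTFT x g σ t η - main l =
      ∑ k ∈ Finset.range (K + 1), (aSTFT (xcomp A φ k) g σ t η - main k) +
        ∑ k ∈ (Finset.range (K + 1)).erase l, main k := by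
    rw [hsum, Finset.sum_sub_distrib,
      ← Finset.add_sum_erase _ main (Finset.mem_range_succ_iff.mpr hl)]
    ring
  rw [hsplit, Msum, Finset.sum_mul]
  refine (norm_add_le _ _).trans (add_le_add ((norm_sum_le _ _).trans (Finset.sum_le_sum hcomp))
    ((norm_sum_le _ _).trans (Finset.sum_le_sum fun k hk => ?_)))
  have hk := Finset.mem_range_succ_iff.mp (Finset.mem_of_mem_erase hk)
  simp only [main, norm_mul, norm_expTwoPiI, mul_one, Complex.norm_real, Real.norm_eq_abs,
    abs_of_nonneg (hA₀ k hk), le_refl]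

lemma integrable_abs_pow_mul_abs_gaussianPDFReal (n : ℕ) :
    Integrable fun τ => |τ| ^ n * |gaussianPDFReal 0 1 τ| := by
  refine (((integrable_rpow_mul_exp_neg_mul_sq (b := 1 / 2) (by norm_num) (s := n)
    (by linarith [n.cast_nonneg (α := ℝ)])).abs).const_mul (√(2 * π))⁻¹).congr
    (ae_of_all _ fun τ => ?_)
  simp only [gaussianPDFReal, Real.rpow_natCast, abs_mul, abs_pow, abs_inv, abs_of_pos (exp_pos _),
    abs_of_nonneg (Real.sqrt_nonneg _), NNReal.coe_one, mul_one, sub_zero]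
  ring_nf

lemma hatg_gaussianPDFReal (ξ : ℝ) :
    hatg (gaussianPDFReal 0 1) ξ = exp (-(2 * π ^ 2 * ξ ^ 2)) := by
  have h := charFun_gaussianReal (μ := 0) (v := 1) (-(2 * π * ξ))
  rw [charFun_apply_real, integral_gaussianReal_eq_integral_smul one_ne_zero] at h
  rw [hatg, Complex.ofReal_exp]
  convert h using 2
  · ext τ
    rw [Complex.real_smul]
    push_cast
    ring_nf
  · push_cast
    ring_nf

lemma norm_hatg_gaussianPDFReal (ξ : ℝ) :
    ‖hatg (gaussianPDFReal 0 1) ξ‖ = exp (-(2 * π ^ 2 * ξ ^ 2)) := by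
  rw [hatg_gaussianPDFReal, Complex.norm_real, Real.norm_eq_abs, abs_of_pos (exp_pos _)]

lemma mul_le_sub_of_forall_le_sub {a : ℕ → ℝ} {d : ℝ} {K : ℕ}
    (hgap : ∀ j, 1 ≤ j → j ≤ K → d ≤ a j - a (j - 1)) {k m : ℕ} (hkm : k ≤ m) (hm : m ≤ K) :
    ((m : ℝ) - k) * d ≤ a m - a k := by
  induction m, hkm using Nat.le_induction with
  | base => simp
  | succ m hkm ih =>
    have h := hgap (m + 1) (by omega) hm
    rw [Nat.add_sub_cancel] at h
    push_cast
    linarith [ih (by omega)]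

lemma mul_le_abs_sub_of_forall_le_sub {a : ℕ → ℝ} {δ η : ℝ} {K k l : ℕ}
    (hgap : ∀ j, 1 ≤ j → j ≤ K → 2 * δ ≤ a j - a (j - 1)) (hk : k ≤ K) (hl : l ≤ K)
    (hη : |η - a l| ≤ δ) :
    (2 * |(l : ℝ) - k| - 1) * δ ≤ |a k - η| := by
  obtain ⟨hη₁, hη₂⟩ := abs_le.mp hη
  rcases le_total k l with hkl | hlk
  · have h := mul_le_sub_of_forall_le_sub hgap hkl hl
    rw [abs_of_nonneg (by simpa using hkl)]
    linarith [neg_abs_le (a k - η)]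
  · have h := mul_le_sub_of_forall_le_sub hgap hlk hk
    rw [abs_sub_comm, abs_of_nonneg (by simpa using hlk)]
    linarith [le_abs_self (a k - η)]

lemma one_le_abs_natCast_sub_natCast {k l : ℕ} (h : k ≠ l) : 1 ≤ |(l : ℝ) - k| := by
  have : (l : ℤ) - k ≠ 0 := sub_ne_zero.mpr (by exact_mod_cast h.symm)
  exact_mod_cast Int.one_le_abs this

lemma norm_hatg_gaussianPDFReal_le_of_gap {K k l : ℕ} {b : ℕ → ℝ} {α s η : ℝ} (hs : 0 < s)
    (hα : 0 ≤ α) (hgap : ∀ j, 1 ≤ j → j ≤ K → 2 * (α / s) ≤ b j - b (j - 1))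
    (hk : k ≤ K) (hl : l ≤ K) (hkl : k ≠ l) (hη : |η - b l| ≤ α / s) :
    ‖hatg (gaussianPDFReal 0 1) (s * (η - b k))‖ ≤
      exp (-(2 * π ^ 2 * (α * (2 * |(l : ℝ) - k| - 1)) ^ 2)) := by
  have hsep := mul_le_abs_sub_of_forall_le_sub hgap hk hl hη
  have h₀ : 0 ≤ α * (2 * |(l : ℝ) - k| - 1) :=
    mul_nonneg hα (by linarith [one_le_abs_natCast_sub_natCast hkl])
  have h₁ : α * (2 * |(l : ℝ) - k| - 1) ≤ |s * (η - b k)| := by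
    rw [abs_mul, abs_of_pos hs, abs_sub_comm η]
    calc α * (2 * |(l : ℝ) - k| - 1) = s * ((2 * |(l : ℝ) - k| - 1) * (α / s)) := by
          field_simp
      _ ≤ s * |b k - η| := by gcongr
  rw [norm_hatg_gaussianPDFReal, exp_le_exp, neg_le_neg_iff, ← sq_abs (s * _)]
  gcongr

lemma exp_neg_two_pi_sq_mul_sq_le {τ₀ α c : ℝ} (hτ₀ : 0 < τ₀) (hτ₀' : τ₀ ≤ 1)
    (hα : α = (2 * π)⁻¹ * √(2 * log τ₀⁻¹)) (hc : 1 ≤ c) :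
    exp (-(2 * π ^ 2 * (α * c) ^ 2)) ≤ τ₀ := by
  have hlog : 0 ≤ log τ₀⁻¹ := log_nonneg (one_le_inv₀ hτ₀ |>.mpr hτ₀')
  have hα2 : 2 * π ^ 2 * α ^ 2 = log τ₀⁻¹ := by
    rw [hα, mul_pow, inv_pow, sq_sqrt (by positivity)]
    field_simp
  calc exp (-(2 * π ^ 2 * (α * c) ^ 2)) ≤ exp (-(2 * π ^ 2 * α ^ 2)) := by
        rw [exp_le_exp, neg_le_neg_iff, mul_pow]
        nlinarith [mul_le_mul_of_nonneg_left (one_le_pow₀ (n := 2) hc)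
          (by positivity : 0 ≤ 2 * π ^ 2 * α ^ 2)]
    _ = τ₀ := by rw [hα2, exp_neg, exp_log (inv_pos.mpr hτ₀), inv_inv]

lemma errG_eq (K : ℕ) (A : ℕ → ℝ → ℝ) (g σ : ℝ → ℝ) (α ε₁ ε₂ : ℝ) (l : ℕ) (t : ℝ) :
    errG K A g σ α ε₁ ε₂ l t = Msum K A t * lam0 g σ ε₁ ε₂ t +
      ∑ k ∈ (Finset.range (K + 1)).erase l,
        A k t * exp (-(2 * π ^ 2 * (α * (2 * |(l : ℝ) - k| - 1)) ^ 2)) := by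
  unfold errG lam0
  ring

lemma errG_le {K : ℕ} {A : ℕ → ℝ → ℝ} {g σ : ℝ → ℝ} {τ₀ α ε₁ ε₂ t : ℝ} {l : ℕ}
    (hτ₀ : 0 < τ₀) (hτ₀' : τ₀ ≤ 1) (hα : α = (2 * π)⁻¹ * √(2 * log τ₀⁻¹))
    (hA₀ : ∀ k ≤ K, 0 ≤ A k t) (hl : l ≤ K) :
    errG K A g σ α ε₁ ε₂ l t ≤
      Msum K A t * lam0 g σ ε₁ ε₂ t + τ₀ * (Msum K A t - A l t) := by
  rw [errG_eq, Msum, ← Finset.sum_erase_eq_sub (Finset.mem_range_succ_iff.mpr hl),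
    Finset.mul_sum]
  refine add_le_add le_rfl (Finset.sum_le_sum fun k hk => ?_)
  rw [mul_comm τ₀]
  refine mul_le_mul_of_nonneg_left (exp_neg_two_pi_sq_mul_sq_le hτ₀ hτ₀' hα ?_)
    (hA₀ k (Finset.mem_range_succ_iff.mp (Finset.mem_of_mem_erase hk)))
  linarith [one_le_abs_natCast_sub_natCast (Finset.ne_of_mem_erase hk)]

lemma errG_pos {K : ℕ} {A : ℕ → ℝ → ℝ} {g σ : ℝ → ℝ} {α ε₁ ε₂ t : ℝ} {l : ℕ}
    (hε₁ : 0 ≤ ε₁) (hε₂ : 0 ≤ ε₂) (hσ : 0 ≤ σ t) (hA : ∀ k ≤ K, 0 < A k t) (hl : l ≠ 0) :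
    0 < errG K A g σ α ε₁ ε₂ l t := by
  have hM : 0 ≤ Msum K A t :=
    Finset.sum_nonneg fun k hk => (hA k (Finset.mem_range_succ_iff.mp hk)).le
  have hlam : 0 ≤ lam0 g σ ε₁ ε₂ t := by
    have := momentI_nonneg g 1
    have := momentI_nonneg g 2
    unfold lam0
    positivity
  have h0 : 0 ∈ (Finset.range (K + 1)).erase l := by simp [Ne.symm hl]
  rw [errG_eq]
  refine add_pos_of_nonneg_of_pos (mul_nonneg hM hlam)
    (lt_of_lt_of_le ?_ (Finset.single_le_sum (fun k hk => ?_) h0))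
  · exact mul_pos (hA 0 (Nat.zero_le K)) (exp_pos _)
  · exact mul_nonneg (hA k (Finset.mem_range_succ_iff.mp (Finset.mem_of_mem_erase hk))).le
      (exp_pos _).le

theorem abs_norm_aSTFT_gaussian_sub_le_errG {K : ℕ} {A φ : ℕ → ℝ → ℝ} {x : ℝ → ℂ}
    {σ : ℝ → ℝ} {b : ℕ → ℝ} {α t ε₁ ε₂ : ℝ} {l : ℕ} (hl : l ≤ K)
    (hx : ∀ s, x s = ∑ k ∈ Finset.range (K + 1), xcomp A φ k s)
    (hA : ∀ k ≤ K, Continuous (A k)) (hφ : ∀ k ≤ K, Continuous (φ k)) (hσ : 0 < σ t)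
    (hA₀ : ∀ k ≤ K, 0 ≤ A k t) (hlip : ∀ k ≤ K, ∀ τ, |A k (t + τ) - A k t| ≤ ε₁ * |τ| * A k t)
    (htaylor : ∀ k ≤ K, ∀ τ, |φ k (t + τ) - φ k t - b k * τ| ≤ ε₂ * τ ^ 2 / 2)
    (hα : 0 ≤ α) (hgap : ∀ j, 1 ≤ j → j ≤ K → 2 * (α / σ t) ≤ b j - b (j - 1))
    {η : ℝ} (hη : |η - b l| ≤ α / σ t) :
    |‖aSTFT x (gaussianPDFReal 0 1) σ t η‖ - A l t * exp (-(2 * π ^ 2 * (σ t * (η - b l)) ^ 2))|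
      ≤ errG K A (gaussianPDFReal 0 1) σ α ε₁ ε₂ l t := by
  have h := norm_aSTFT_sub_tone_le hl hx hA hφ (by unfold gaussianPDFReal; fun_prop)
    (fun n _ => integrable_abs_pow_mul_abs_gaussianPDFReal n) hσ hA₀ hlip htaylor η
  have hmain : ‖(A l t : ℂ) * expTwoPiI (φ l t) * hatg (gaussianPDFReal 0 1) (σ t * (η - b l))‖ =
      A l t * exp (-(2 * π ^ 2 * (σ t * (η - b l)) ^ 2)) := by
    rw [norm_mul, norm_mul, norm_expTwoPiI, mul_one, norm_hatg_gaussianPDFReal, Complex.norm_real,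
      Real.norm_eq_abs, abs_of_nonneg (hA₀ l hl)]
  rw [← hmain, errG_eq]
  refine (abs_norm_sub_norm_le _ _).trans (h.trans (add_le_add le_rfl (Finset.sum_le_sum
    fun k hk => mul_le_mul_of_nonneg_left ?_ ?_)))
  · exact norm_hatg_gaussianPDFReal_le_of_gap hσ hα hgap
      (Finset.mem_range_succ_iff.mp (Finset.mem_of_mem_erase hk)) hl (Finset.ne_of_mem_erase hk) hη
  · exact hA₀ k (Finset.mem_range_succ_iff.mp (Finset.mem_of_mem_erase hk))

lemma mul_lt_of_sub_le_mul_exp_neg_add {a e X : ℝ} (he : 0 < e) (hea : e < a / 4)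
    (hX : 0 ≤ X) (h : a - e ≤ a * exp (-X) + e) : X * a < 4 * e := by
  have hexp : exp (-X) * (1 + X) ≤ 1 := by
    have := add_one_le_exp X
    rw [exp_neg, inv_mul_le_iff₀ (exp_pos X)]
    linarith
  have ha : 0 < a := by linarith
  have h₁ : X * a ≤ 2 * e * (1 + X) := by
    nlinarith [mul_le_mul_of_nonneg_right (show a - 2 * e ≤ a * exp (-X) by linarith)
      (by linarith : 0 ≤ 1 + X)]
  have h₂ : X < 1 := by nlinarith
  nlinarith

lemma abs_lt_of_sub_le_mul_exp_add {a e s D : ℝ} (ha : 0 < a) (he : 0 < e) (hea : e < a / 4)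
    (hs : 0 < s) (h : a - e ≤ a * exp (-(2 * π ^ 2 * (s * D) ^ 2)) + e) :
    |D| < √2 / (s * π) * √(e / a) := by
  have hX := mul_lt_of_sub_le_mul_exp_neg_add he hea (by positivity) h
  rw [← sqrt_sq (by positivity : 0 ≤ s * π), ← sqrt_div' _ (by positivity),
    ← sqrt_mul' _ (by positivity), ← sqrt_sq_eq_abs, sqrt_lt_sqrt_iff (sq_nonneg D),
    div_mul_div_comm, lt_div_iff₀ (by positivity)]
  linarith

lemma two_mul_div_le_deriv_sub_deriv_pred {K : ℕ} {φ : ℕ → ℝ → ℝ} {σ : ℝ → ℝ} {α s : ℝ}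
    (hφ0 : ∀ s, φ 0 s = 0) (hφ'pos : ∀ k, 1 ≤ k → k ≤ K → ∃ c > 0, ∀ s, c ≤ deriv (φ k) s)
    (hfreq : ∃ d > 0, ∀ k, 2 ≤ k → k ≤ K → ∀ s, d ≤ deriv (φ k) s - deriv (φ (k - 1)) s)
    (hσ : 0 < σ s) (hsep : ∀ k, 1 ≤ k → k ≤ K →
      2 * α / (deriv (φ k) s - deriv (φ (k - 1)) s) ≤ σ s)
    {j : ℕ} (hj1 : 1 ≤ j) (hjK : j ≤ K) :
    2 * (α / σ s) ≤ deriv (φ j) s - deriv (φ (j - 1)) s := by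
  have hpos : 0 < deriv (φ j) s - deriv (φ (j - 1)) s := by
    rcases (show j = 1 ∨ 2 ≤ j by omega) with rfl | hj2
    · obtain ⟨c, hc, hcle⟩ := hφ'pos 1 le_rfl hjK
      simpa [show φ 0 = fun _ => 0 from funext hφ0] using hc.trans_le (hcle s)
    · obtain ⟨d, hd, hdle⟩ := hfreq
      exact hd.trans_le (hdle j hj2 hjK s)
  have := (div_le_iff₀ hpos).mp (hsep j hj1 hjK)
  rw [← mul_div_assoc, div_le_iff₀ hσ]
  linarith

lemma abs_sub_sub_deriv_mul_le_of_le {K : ℕ} {φ : ℕ → ℝ → ℝ} {ε : ℝ} (hε : 0 ≤ ε)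
    (hφ0 : ∀ s, φ 0 s = 0) (hφ : ∀ k ≤ K, ContDiff ℝ 2 (φ k))
    (hφ'' : ∀ k, 1 ≤ k → k ≤ K → ∀ s, |deriv (deriv (φ k)) s| ≤ ε) {k : ℕ} (hk : k ≤ K)
    (t τ : ℝ) : |φ k (t + τ) - φ k t - deriv (φ k) t * τ| ≤ ε * τ ^ 2 / 2 := by
  rcases Nat.eq_zero_or_pos k with rfl | hk1
  · simp only [show φ 0 = fun _ => 0 from funext hφ0, deriv_const', sub_zero, zero_mul, abs_zero]
    positivity
  · exact abs_sub_sub_deriv_mul_le (hφ k hk) (hφ'' k hk1 hk) t τ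

theorem cor2_2_IF_general (K : ℕ) (A φ : ℕ → ℝ → ℝ) (ε1 ε2 : ℝ) (x : ℝ → ℂ)
    (g : ℝ → ℝ) (σ : ℝ → ℝ) (τ0 α t epst : ℝ)
    (hε1 : 0 < ε1) (hε2 : 0 < ε2)
    (hAreg : ∀ k ≤ K, ContDiff ℝ 1 (A k))
    (hφreg : ∀ k ≤ K, ContDiff ℝ 2 (φ k))
    (hφ0 : ∀ s, φ 0 s = 0)
    (hApos : ∀ k ≤ K, ∀ s, 0 < A k s)
    (hφ'pos : ∀ k, 1 ≤ k → k ≤ K → ∃ c > 0, ∀ s, c ≤ deriv (φ k) s)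
    (hfreq : ∃ d > 0, ∀ k, 2 ≤ k → k ≤ K → ∀ s, d ≤ deriv (φ k) s - deriv (φ (k - 1)) s)
    (hAlip : ∀ k ≤ K, ∀ s τ, |A k (s + τ) - A k s| ≤ ε1 * |τ| * A k s)
    (hφ'' : ∀ k, 1 ≤ k → k ≤ K → ∀ s, |deriv (deriv (φ k)) s| ≤ ε2)
    (hx : ∀ s, x s = ∑ k ∈ Finset.range (K + 1), xcomp A φ k s)
    (hgdef : ∀ τ : ℝ, g τ = (Real.sqrt (2 * π))⁻¹ * Real.exp (-τ ^ 2 / 2))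
    (hτ0 : 0 < τ0) (hτ0' : τ0 < 1)
    (hαdef : α = (2 * π)⁻¹ * Real.sqrt (2 * Real.log τ0⁻¹))
    (hσ : ∀ s, 0 < σ s)
    (hsep : ∀ s, ∀ k, 1 ≤ k → k ≤ K →
      2 * α / (deriv (φ k) s - deriv (φ (k - 1)) s) ≤ σ s)
    (heps2 : epst ≤ muMin K A t - Msum K A t * (τ0 + lam0 g σ ε1 ε2 t))
    (hErr : ∀ l ≤ K, errG K A g σ α ε1 ε2 l t < A l t / 4)
    (ηhat : ℕ → ℝ)
    (hηmem : ∀ l, 1 ≤ l → l ≤ K → ηhat l ∈ Gtk x g σ φ α t epst l)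
    (hηmax : ∀ l, 1 ≤ l → l ≤ K → ∀ η ∈ Gtk x g σ φ α t epst l,
      ‖aSTFT x g σ t η‖ ≤ ‖aSTFT x g σ t (ηhat l)‖)
    :
    ∀ l, 1 ≤ l → l ≤ K →
      |ηhat l - deriv (φ l) t| <
        Real.sqrt 2 / (σ t * π) * Real.sqrt (errG K A g σ α ε1 ε2 l t / A l t) := by
  intro l hl1 hlK
  obtain rfl : g = gaussianPDFReal 0 1 := funext fun τ => by simp [hgdef, gaussianPDFReal]
  have hα : 0 < α := by
    have := log_pos (one_lt_inv₀ hτ0 |>.mpr hτ0')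
    rw [hαdef]; positivity
  have hV := fun η => abs_norm_aSTFT_gaussian_sub_le_errG (η := η) hlK hx
    (fun k hk => (hAreg k hk).continuous) (fun k hk => (hφreg k hk).continuous) (hσ t)
    (fun k hk => (hApos k hk t).le) (fun k hk => hAlip k hk t)
    (fun k hk => abs_sub_sub_deriv_mul_le_of_le hε2.le hφ0 hφreg hφ'' hk t) hα.le
    (fun _ hj1 hjK => two_mul_div_le_deriv_sub_deriv_pred hφ0 hφ'pos hfreq (hσ t) (hsep t) hj1 hjK)
  have hE := errG_le (g := gaussianPDFReal 0 1) (σ := σ) (ε₁ := ε1) (ε₂ := ε2) hτ0 hτ0'.le hαdef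
    (fun k hk => (hApos k hk t).le) hlK
  have hμ : muMin K A t ≤ A l t := Finset.inf'_le _ (Finset.mem_range_succ_iff.mpr hlK)
  have hpeak := (abs_le.mp (hV (deriv (φ l) t) (by simpa using (div_pos hα (hσ t)).le))).1
  norm_num at hpeak
  -- `ε̃₁ ≤ μ - M(τ₀ + λ₀) < A_ℓ - err_ℓ ≤ |Ṽ_x(t, φ'_ℓ(t))|`, using `err_ℓ ≤ Mλ₀ + τ₀(M - A_ℓ)`
  have hmem : deriv (φ l) t ∈ Gtk x (gaussianPDFReal 0 1) σ φ α t epst l := by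
    refine ⟨?_, by simpa using div_pos hα (hσ t)⟩
    show epst < _
    linarith [mul_pos hτ0 (hApos l hlK t)]
  have hη := (abs_le.mp (hV (ηhat l) (hηmem l hl1 hlK).2.le)).2
  exact abs_lt_of_sub_le_mul_exp_add (hApos l hlK t) (errG_pos hε1.le hε2.le (hσ t).le
    (fun k hk => hApos k hk t) (by omega)) (hErr l hlK) (hσ t)
    (by linarith [hηmax l hl1 hlK _ hmem])

theorem cor2_2_IF (K : ℕ) (A φ : ℕ → ℝ → ℝ) (ε1 ε2 : ℝ) (x : ℝ → ℂ)
    (g : ℝ → ℝ) (σ : ℝ → ℝ) (τ0 α t epst : ℝ)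
    (hε1 : 0 < ε1) (hε2 : 0 < ε2)
    (hAreg : ∀ k ≤ K, ContDiff ℝ 1 (A k))
    (hAbdd : ∀ k ≤ K, ∃ C, ∀ s, |A k s| ≤ C)
    (hφreg : ∀ k ≤ K, ContDiff ℝ 2 (φ k))
    (hφ0 : ∀ s, φ 0 s = 0)
    (hApos : ∀ k ≤ K, ∀ s, 0 < A k s)
    (hφ'pos : ∀ k, 1 ≤ k → k ≤ K → ∃ c > 0, ∀ s, c ≤ deriv (φ k) s)
    (hφ'bdd : ∀ k, 1 ≤ k → k ≤ K → ∃ C, ∀ s, deriv (φ k) s ≤ C)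
    (hfreq : ∃ d > 0, ∀ k, 2 ≤ k → k ≤ K → ∀ s, d ≤ deriv (φ k) s - deriv (φ (k - 1)) s)
    (hAlip : ∀ k ≤ K, ∀ s τ, |A k (s + τ) - A k s| ≤ ε1 * |τ| * A k s)
    (hφ'' : ∀ k, 1 ≤ k → k ≤ K → ∀ s, |deriv (deriv (φ k)) s| ≤ ε2)
    (hx : ∀ s, x s = ∑ k ∈ Finset.range (K + 1), xcomp A φ k s)
    (hgdef : ∀ τ : ℝ, g τ = (Real.sqrt (2 * π))⁻¹ * Real.exp (-τ ^ 2 / 2))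
    (hτ0 : 0 < τ0) (hτ0' : τ0 < 1)
    (hαdef : α = (2 * π)⁻¹ * Real.sqrt (2 * Real.log τ0⁻¹))
    (hσ : ∀ s, 0 < σ s)
    (hsep : ∀ s, ∀ k, 1 ≤ k → k ≤ K →
      2 * α / (deriv (φ k) s - deriv (φ (k - 1)) s) ≤ σ s)
    (hmain : 2 * Msum K A t * (τ0 + lam0 g σ ε1 ε2 t) ≤ muMin K A t)
    (heps1 : Msum K A t * (τ0 + lam0 g σ ε1 ε2 t) ≤ epst)
    (heps2 : epst ≤ muMin K A t - Msum K A t * (τ0 + lam0 g σ ε1 ε2 t))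
    (hErr : ∀ l ≤ K, errG K A g σ α ε1 ε2 l t < A l t / 4)
    (ηhat : ℕ → ℝ)
    (hηmem : ∀ l, 1 ≤ l → l ≤ K → ηhat l ∈ Gtk x g σ φ α t epst l)
    (hηmax : ∀ l, 1 ≤ l → l ≤ K → ∀ η ∈ Gtk x g σ φ α t epst l,
      ‖aSTFT x g σ t η‖ ≤ ‖aSTFT x g σ t (ηhat l)‖)
    :
    ∀ l, 1 ≤ l → l ≤ K →
      |ηhat l - deriv (φ l) t| <
        Real.sqrt 2 / (σ t * π) * Real.sqrt (errG K A g σ α ε1 ε2 l t / A l t) :=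
  cor2_2_IF_general K A φ ε1 ε2 x g σ τ0 α t epst hε1 hε2 hAreg hφreg hφ0 hApos hφ'pos hfreq hAlip
    hφ'' hx hgdef hτ0 hτ0' hαdef hσ hsep heps2 hErr ηhat hηmem hηmax
end
end

section
/- Theorem 3.1(a). Fix t ∈ ℝ. Suppose x ∈ 𝓓_{ε1,ε3}, g is an admissible window function, σ(t) > 0 is such that the zones O_k, 0 ≤ k ≤ K, are pairwise disjoint, Err_ℓ(t) < (1/2)|G_ℓ(0)| A_ℓ(t) for each ℓ, and 2M(t)(τ0 + Π_0(t)) ≤ g_0(t) μ(t). Let ε̃1 satisfy M(t)(τ0 + Π_0(t)) ≤ ε̃1 ≤ g_0(t)μ(t) − M(t)(τ0 + Π_0(t)). Then 𝓖_t = {η : |Ṽ_x(t,η)| > ε̃1} is the disjoint union of exactly the K+1 sets 𝓗_{t,k} = {η ∈ 𝓖_t : |η − φ'_k(t)| < α_k/σ(t)}, 0 ≤ k ≤ K, and each 𝓗_{t,k} is non-empty (in particular φ'_k(t) ∈ 𝓗_{t,k}). -/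
open MeasureTheory Real

noncomputable section

/-- `G(ξ) = ∫ e^{iπcτ²} g(τ) e^{−2πiξτ} dτ`, the Fourier transform of the
chirp-modulated window. -/
def chirpG (g : ℝ → ℝ) (c ξ : ℝ) : ℂ :=
  ∫ τ : ℝ, Complex.exp (((π * c * τ ^ 2 : ℝ) : ℂ) * Complex.I) * (g τ : ℂ) *
    Complex.exp (-(2 * (π : ℂ) * ξ * τ) * Complex.I)

/-- `ğ(ξ,λ) = ∫ g(τ) e^{−2πiξτ − iπλτ²} dτ` (used to define admissibility). -/
def breveG (g : ℝ → ℝ) (lam ξ : ℝ) : ℂ :=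
  ∫ τ : ℝ, (g τ : ℂ) *
    Complex.exp (-(2 * (π : ℂ) * ξ * τ) * Complex.I - ((π * lam * τ ^ 2 : ℝ) : ℂ) * Complex.I)

/-- The chirp-rate parameter `σ(t)² φ''_k(t)` of the `k`-th component. -/
def crate (φ : ℕ → ℝ → ℝ) (σ : ℝ → ℝ) (k : ℕ) (t : ℝ) : ℝ :=
  σ t ^ 2 * deriv (deriv (φ k)) t

/-- `Π_0(t) = ε1 I_1 σ(t) + (π/3) ε3 I_3 σ(t)³`. -/
def Pi0 (g : ℝ → ℝ) (σ : ℝ → ℝ) (ε1 ε3 t : ℝ) : ℝ :=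
  ε1 * momentI g 1 * σ t + π / 3 * ε3 * momentI g 3 * σ t ^ 3

/-- `Υ_{k,ℓ} = α_k + α_ℓ + 2 Σ_{j between k and ℓ} α_j`. -/
def Ups (αf : ℕ → ℝ) (k l : ℕ) : ℝ :=
  αf k + αf l + 2 * ∑ j ∈ Finset.Ioo (min k l) (max k l), αf j

/-- `Err_ℓ(t) = M(t)Π_0(t) + Σ_{k≠ℓ} A_k(t) |G_k(Υ_{k,ℓ} − α_ℓ)|`. -/
def ErrL (K : ℕ) (A φ : ℕ → ℝ → ℝ) (g : ℝ → ℝ) (σ : ℝ → ℝ) (αf : ℕ → ℝ)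
    (ε1 ε3 : ℝ) (l : ℕ) (t : ℝ) : ℝ :=
  Msum K A t * Pi0 g σ ε1 ε3 t +
    ∑ k ∈ (Finset.range (K + 1)).erase l,
      A k t * ‖chirpG g (crate φ σ k t) (Ups αf k l - αf l)‖

/-- `g_0(t) = min_{0 ≤ k ≤ K} |G_k(0)|`. -/
def g0min (K : ℕ) (g : ℝ → ℝ) (φ : ℕ → ℝ → ℝ) (σ : ℝ → ℝ) (t : ℝ) : ℝ :=
  (Finset.range (K + 1)).inf' (by simp) fun k => ‖chirpG g (crate φ σ k t) 0‖

/-- `𝓗_{t,k} = {η ∈ 𝓖_t : |η − φ'_k(t)| < α_k/σ(t)}`. -/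
def Htk (x : ℝ → ℂ) (g : ℝ → ℝ) (σ : ℝ → ℝ) (φ : ℕ → ℝ → ℝ) (αf : ℕ → ℝ)
    (t eps : ℝ) (k : ℕ) : Set ℝ :=
  {η | η ∈ Gt x g σ t eps ∧ |η - deriv (φ k) t| < αf k / σ t}

/-!
After the substitution `τ = σ(t) u`, the `k`-th component of `Ṽ_x(t, η)` differs from
`x_k(t) G_k(σ(t) (η - φ'_k(t)))` by at most `A_k(t) Π_0(t)`: replacing `A_k(t + σu)` by `A_k(t)`
costs `ε1 σ |u| A_k(t)`, and replacing the phase `φ_k(t + σu)` by its second-order Taylor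
polynomial costs `ε3 (σ|u|)³ / 6`, which is exactly what turns `e^{2πiφ_k}` into the chirp
defining `G_k`. Admissibility makes `|G_k|` even and decreasing, so `|G_k(ξ)| ≤ τ0` once
`|ξ| ≥ α_k`. Outside every zone `O_k` all terms are therefore at most `τ0 A_k(t)`, and
`|Ṽ_x| ≤ M (τ0 + Π_0) ≤ ε̃1`. At `η = φ'_ℓ(t)` disjointness of the zones puts every other
frequency at distance at least `α_k / σ(t)`, so
`|Ṽ_x| ≥ A_ℓ |G_ℓ(0)| - τ0 (M - A_ℓ) - M Π_0 > g_0 μ - M (τ0 + Π_0) ≥ ε̃1`.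
-/

theorem abs_taylor_two_remainder_le {f : ℝ → ℝ} {C : ℝ} (hf : ContDiff ℝ 3 f)
    (hC : ∀ s, |deriv (deriv (deriv f)) s| ≤ C) (t h : ℝ) :
    |f (t + h) - f t - deriv f t * h - deriv (deriv f) t * h ^ 2 / 2| ≤ C * |h| ^ 3 / 6 := by
  rcases eq_or_ne h 0 with rfl | hh
  · simp
  have hne : t ≠ t + h := by simpa using hh
  obtain ⟨s, -, hs⟩ := taylor_mean_remainder_lagrange_iteratedDeriv (n := 2) hne hf.contDiffOn
  have hwithin : ∀ k ≤ 2, iteratedDerivWithin k f (Set.uIcc t (t + h)) t = iteratedDeriv k f t :=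
    fun k hk => iteratedDerivWithin_eq_iteratedDeriv (uniqueDiffOn_uIcc hne)
      (hf.contDiffAt.of_le (by exact_mod_cast hk.trans (by norm_num))) Set.left_mem_uIcc
  have htaylor : taylorWithinEval f 2 (Set.uIcc t (t + h)) t (t + h)
      = f t + deriv f t * h + deriv (deriv f) t * h ^ 2 / 2 := by
    simp only [taylor_within_apply, Finset.sum_range_succ, Finset.sum_range_zero,
      hwithin 0 (by norm_num), hwithin 1 (by norm_num), hwithin 2 le_rfl,
      iteratedDeriv_zero, iteratedDeriv_succ, smul_eq_mul]
    norm_num [Nat.factorial]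
    ring
  rw [sub_sub, sub_sub, ← add_assoc, ← htaylor, hs, iteratedDeriv_succ, iteratedDeriv_succ,
    iteratedDeriv_one, add_sub_cancel_left, abs_div, abs_mul, abs_pow]
  norm_num [Nat.factorial]
  gcongr
  exact hC s

open Complex in
theorem norm_ofReal_mul_exp_sub_le (a b θ ψ : ℝ) (hb : 0 ≤ b) :
    ‖(a : ℂ) * exp (θ * I) - (b : ℂ) * exp (ψ * I)‖ ≤ |a - b| + b * |θ - ψ| := by
  have hsplit : (a : ℂ) * exp (θ * I) - (b : ℂ) * exp (ψ * I)
      = ((a - b : ℝ) : ℂ) * exp (θ * I) + (b : ℂ) * exp (ψ * I) * (exp (I * (θ - ψ : ℝ)) - 1) := by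
    rw [mul_sub, mul_assoc, ← Complex.exp_add]; push_cast; ring_nf
  calc _ ≤ ‖((a - b : ℝ) : ℂ) * exp (θ * I)‖
        + ‖(b : ℂ) * exp (ψ * I) * (exp (I * (θ - ψ : ℝ)) - 1)‖ := hsplit ▸ norm_add_le _ _
    _ ≤ |a - b| + b * |θ - ψ| := by
      rw [norm_mul, norm_mul, norm_mul, norm_exp_ofReal_mul_I, norm_exp_ofReal_mul_I, norm_real,
        norm_real, Real.norm_of_nonneg hb, mul_one, mul_one, Real.norm_eq_abs]
      gcongr
      simpa using Real.norm_exp_I_mul_ofReal_sub_one_le (x := θ - ψ)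

theorem norm_xcomp (A φ : ℕ → ℝ → ℝ) (k : ℕ) (s : ℝ) : ‖xcomp A φ k s‖ = |A k s| := by
  rw [xcomp, norm_mul, Complex.norm_real, Real.norm_eq_abs, ← Complex.ofReal_ofNat,
    ← Complex.ofReal_mul, ← Complex.ofReal_mul, Complex.norm_exp_ofReal_mul_I, mul_one]

def windowedIntegrand (f : ℝ → ℂ) (g : ℝ → ℝ) (s t η u : ℝ) : ℂ :=
  f (t + s * u) * (g u : ℂ) * Complex.exp (-(2 * (π : ℂ) * η * ((s * u : ℝ) : ℂ)) * Complex.I)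

def chirpIntegrand (g : ℝ → ℝ) (c ξ u : ℝ) : ℂ :=
  Complex.exp (((π * c * u ^ 2 : ℝ) : ℂ) * Complex.I) * (g u : ℂ) *
    Complex.exp (-(2 * (π : ℂ) * ξ * u) * Complex.I)

theorem chirpG_eq_integral_chirpIntegrand (g : ℝ → ℝ) (c ξ : ℝ) :
    chirpG g c ξ = ∫ u : ℝ, chirpIntegrand g c ξ u := rfl

theorem aSTFT_eq_integral_rescaled (f : ℝ → ℂ) (g σ : ℝ → ℝ) (t η : ℝ) (hσ : 0 < σ t) :
    aSTFT f g σ t η = ∫ u : ℝ, windowedIntegrand f g (σ t) t η u := by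
  have hσ' : (σ t : ℂ) ≠ 0 := by exact_mod_cast hσ.ne'
  have hsub := Measure.integral_comp_mul_left (fun τ : ℝ => f (t + τ) *
    (((σ t)⁻¹ * g (τ / σ t) : ℝ) : ℂ) * Complex.exp (-(2 * (π : ℂ) * η * τ) * Complex.I)) (σ t)
  rw [abs_of_pos (inv_pos.2 hσ)] at hsub
  rw [aSTFT, ← one_smul ℝ (∫ τ : ℝ, _), ← mul_inv_cancel₀ hσ.ne', mul_smul, ← hsub,
    ← integral_smul]
  congr 1 with u
  rw [windowedIntegrand, mul_div_cancel_left₀ _ hσ.ne', Complex.real_smul]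
  push_cast
  field_simp

theorem norm_windowedIntegrand_xcomp_sub_le (A φ : ℕ → ℝ → ℝ) (g σ : ℝ → ℝ) (k : ℕ)
    (ε1 ε3 t η u : ℝ) (hσ : 0 < σ t) (hA0 : 0 ≤ A k t)
    (hA : |A k (t + σ t * u) - A k t| ≤ ε1 * |σ t * u| * A k t)
    (hφ : |φ k (t + σ t * u) - φ k t - deriv (φ k) t * (σ t * u)
      - deriv (deriv (φ k)) t * (σ t * u) ^ 2 / 2| ≤ ε3 * |σ t * u| ^ 3 / 6) :
    ‖windowedIntegrand (xcomp A φ k) g (σ t) t η u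
      - xcomp A φ k t * chirpIntegrand g (crate φ σ k t) (σ t * (η - deriv (φ k) t)) u‖
      ≤ A k t * (ε1 * σ t * (|u| ^ 1 * |g u|) + π / 3 * ε3 * σ t ^ 3 * (|u| ^ 3 * |g u|)) := by
  set h := σ t * u with hh
  set θ : ℝ := 2 * π * φ k (t + h)
  set θ₀ : ℝ := 2 * π * (φ k t + deriv (φ k) t * h + deriv (deriv (φ k)) t * h ^ 2 / 2)
  set ψ : ℝ := -(2 * π * η * h)
  have hθ : |θ - θ₀| ≤ π / 3 * ε3 * |h| ^ 3 := by
    calc |θ - θ₀| = 2 * π * |φ k (t + h) - φ k t - deriv (φ k) t * h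
          - deriv (deriv (φ k)) t * h ^ 2 / 2| := by
          rw [← abs_of_pos two_pi_pos, ← abs_mul]; congr 1; simp only [θ, θ₀]; ring
      _ ≤ π / 3 * ε3 * |h| ^ 3 := by nlinarith [pi_pos]
  have hfactor : windowedIntegrand (xcomp A φ k) g (σ t) t η u
      - xcomp A φ k t * chirpIntegrand g (crate φ σ k t) (σ t * (η - deriv (φ k) t)) u
      = ((A k (t + h) : ℂ) * Complex.exp (θ * Complex.I)
          - (A k t : ℂ) * Complex.exp (θ₀ * Complex.I))
        * ((g u : ℂ) * Complex.exp (ψ * Complex.I)) := by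
    simp only [windowedIntegrand, chirpIntegrand, xcomp, crate, ← hh]
    rw [show (θ₀ : ℂ) * Complex.I = (2 * π * φ k t : ℝ) * Complex.I
      + (π * (σ t ^ 2 * deriv (deriv (φ k)) t) * u ^ 2 : ℝ) * Complex.I
      + (-(2 * π * (σ t * (η - deriv (φ k) t)) * u) : ℝ) * Complex.I - ψ * Complex.I by
        simp only [θ₀, ψ, hh]; push_cast; ring]
    simp only [Complex.exp_add, Complex.exp_sub, θ, ψ]
    push_cast
    field_simp
  rw [hfactor, norm_mul, norm_mul, Complex.norm_exp_ofReal_mul_I, mul_one, Complex.norm_real,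
    Real.norm_eq_abs]
  calc _ ≤ (|A k (t + h) - A k t| + A k t * |θ - θ₀|) * |g u| := by
        gcongr; exact norm_ofReal_mul_exp_sub_le _ _ _ _ hA0
    _ ≤ (ε1 * |h| * A k t + A k t * (π / 3 * ε3 * |h| ^ 3)) * |g u| := by gcongr
    _ = _ := by rw [hh, abs_mul, abs_of_pos hσ]; ring

theorem integrable_windowedIntegrand_xcomp (A φ : ℕ → ℝ → ℝ) (g σ : ℝ → ℝ) (k : ℕ) (ε1 t η : ℝ)
    (hAc : Continuous (A k)) (hφc : Continuous (φ k))
    (hA : ∀ h, |A k (t + h) - A k t| ≤ ε1 * |h| * A k t)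
    (hg : Integrable g) (hg1 : Integrable fun u : ℝ => u * g u) :
    Integrable (windowedIntegrand (xcomp A φ k) g (σ t) t η) := by
  have hmeas : AEStronglyMeasurable (windowedIntegrand (xcomp A φ k) g (σ t) t η) := by
    refine (Continuous.aestronglyMeasurable ?_).mul
      (Complex.continuous_ofReal.comp_aestronglyMeasurable hg.1) |>.mul
      (Continuous.aestronglyMeasurable (by fun_prop))
    unfold xcomp; fun_prop
  refine Integrable.mono' ((hg.norm.const_mul |A k t|).add
    (hg1.norm.const_mul (ε1 * |σ t| * A k t))) hmeas (.of_forall fun u => ?_)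
  have hAu : |A k (t + σ t * u)| ≤ |A k t| + ε1 * |σ t| * A k t * |u| := by
    have := abs_sub_abs_le_abs_sub (A k (t + σ t * u)) (A k t)
    have := hA (σ t * u)
    rw [abs_mul] at this
    linarith
  calc _ = |A k (t + σ t * u)| * |g u| := by simp [windowedIntegrand, norm_xcomp, Complex.norm_exp]
    _ ≤ (|A k t| + ε1 * |σ t| * A k t * |u|) * |g u| := by gcongr
    _ = _ := by simp only [Pi.add_apply, Real.norm_eq_abs, abs_mul]; ring

theorem integrable_chirpIntegrand (g : ℝ → ℝ) (hg : Integrable g) (c ξ : ℝ) :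
    Integrable (chirpIntegrand g c ξ) := by
  refine Integrable.mono' hg.norm ((Continuous.aestronglyMeasurable (by fun_prop)).mul
    (Complex.continuous_ofReal.comp_aestronglyMeasurable hg.1) |>.mul
    (Continuous.aestronglyMeasurable (by fun_prop))) (.of_forall fun u => ?_)
  rw [chirpIntegrand, norm_mul, norm_mul, Complex.norm_exp_ofReal_mul_I]
  simp [Complex.norm_exp]

theorem norm_integral_windowedIntegrand_xcomp_sub_le (A φ : ℕ → ℝ → ℝ) (g σ : ℝ → ℝ) (k : ℕ)
    (ε1 ε3 t η : ℝ) (hσ : 0 < σ t) (hAc : Continuous (A k)) (hφc : Continuous (φ k))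
    (hA0 : 0 ≤ A k t) (hA : ∀ h, |A k (t + h) - A k t| ≤ ε1 * |h| * A k t)
    (hφ : ∀ h, |φ k (t + h) - φ k t - deriv (φ k) t * h - deriv (deriv (φ k)) t * h ^ 2 / 2|
      ≤ ε3 * |h| ^ 3 / 6)
    (hg : Integrable g) (hg1 : Integrable fun u : ℝ => u * g u)
    (hg3 : Integrable fun u : ℝ => u ^ 3 * g u) :
    ‖(∫ u : ℝ, windowedIntegrand (xcomp A φ k) g (σ t) t η u)
      - xcomp A φ k t * chirpG g (crate φ σ k t) (σ t * (η - deriv (φ k) t))‖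
      ≤ A k t * Pi0 g σ ε1 ε3 t := by
  have hI1 : Integrable fun u : ℝ => |u| ^ 1 * |g u| := by simpa [abs_mul] using hg1.abs
  have hI3 : Integrable fun u : ℝ => |u| ^ 3 * |g u| := by simpa [abs_mul] using hg3.abs
  rw [chirpG_eq_integral_chirpIntegrand, ← integral_const_mul, ← integral_sub
    (integrable_windowedIntegrand_xcomp A φ g σ k ε1 t η hAc hφc hA hg hg1)
    ((integrable_chirpIntegrand g hg _ _).const_mul _)]
  calc _ ≤ ∫ u : ℝ, A k t *
        (ε1 * σ t * (|u| ^ 1 * |g u|) + π / 3 * ε3 * σ t ^ 3 * (|u| ^ 3 * |g u|)) :=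
        norm_integral_le_of_norm_le (((hI1.const_mul _).add (hI3.const_mul _)).const_mul _)
          (.of_forall fun u => norm_windowedIntegrand_xcomp_sub_le A φ g σ k ε1 ε3 t η u hσ hA0
            (hA _) (hφ _))
    _ = A k t * Pi0 g σ ε1 ε3 t := by
        rw [integral_const_mul, integral_add (hI1.const_mul _) (hI3.const_mul _),
          integral_const_mul, integral_const_mul, Pi0, momentI, momentI]
        ring

def chirpModel (K : ℕ) (A φ : ℕ → ℝ → ℝ) (g σ : ℝ → ℝ) (t η : ℝ) : ℂ :=
  ∑ k ∈ Finset.range (K + 1), xcomp A φ k t * chirpG g (crate φ σ k t) (σ t * (η - deriv (φ k) t))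

theorem norm_aSTFT_sub_chirpModel_le (K : ℕ) (A φ : ℕ → ℝ → ℝ) (x : ℝ → ℂ) (g σ : ℝ → ℝ)
    (ε1 ε3 t η : ℝ) (hσ : 0 < σ t)
    (hAc : ∀ k ≤ K, Continuous (A k)) (hφc : ∀ k ≤ K, Continuous (φ k))
    (hA0 : ∀ k ≤ K, 0 ≤ A k t) (hA : ∀ k ≤ K, ∀ h, |A k (t + h) - A k t| ≤ ε1 * |h| * A k t)
    (hφ : ∀ k ≤ K, ∀ h, |φ k (t + h) - φ k t - deriv (φ k) t * h
      - deriv (deriv (φ k)) t * h ^ 2 / 2| ≤ ε3 * |h| ^ 3 / 6)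
    (hx : ∀ s, x s = ∑ k ∈ Finset.range (K + 1), xcomp A φ k s)
    (hg : Integrable g) (hg1 : Integrable fun u : ℝ => u * g u)
    (hg3 : Integrable fun u : ℝ => u ^ 3 * g u) :
    ‖aSTFT x g σ t η - chirpModel K A φ g σ t η‖ ≤ Msum K A t * Pi0 g σ ε1 ε3 t := by
  have hle : ∀ k ∈ Finset.range (K + 1), k ≤ K := fun _ => Finset.mem_range_succ_iff.mp
  rw [aSTFT_eq_integral_rescaled _ _ _ _ _ hσ]
  have hsum : windowedIntegrand x g (σ t) t η
      = fun u => ∑ k ∈ Finset.range (K + 1), windowedIntegrand (xcomp A φ k) g (σ t) t η u := by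
    funext u; simp only [windowedIntegrand, hx, Finset.sum_mul]
  rw [hsum, integral_finsetSum _ fun k hk => integrable_windowedIntegrand_xcomp A φ g σ k ε1 t η
      (hAc k (hle k hk)) (hφc k (hle k hk)) (hA k (hle k hk)) hg hg1,
    chirpModel, ← Finset.sum_sub_distrib, Msum, Finset.sum_mul]
  exact (norm_sum_le _ _).trans <| Finset.sum_le_sum fun k hk =>
    norm_integral_windowedIntegrand_xcomp_sub_le A φ g σ k ε1 ε3 t η hσ (hAc k (hle k hk))
      (hφc k (hle k hk)) (hA0 k (hle k hk)) (hA k (hle k hk)) (hφ k (hle k hk)) hg hg1 hg3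

theorem chirpG_eq_breveG (g : ℝ → ℝ) (c ξ : ℝ) : chirpG g c ξ = breveG g (-c) ξ := by
  unfold chirpG breveG
  congr 1 with τ
  rw [mul_comm (Complex.exp _) (g τ : ℂ), mul_assoc, ← Complex.exp_add]
  congr 2
  push_cast; ring

theorem norm_chirpG_le_of_le_abs (g : ℝ → ℝ)
    (heven : ∀ lam ξ, ‖breveG g lam (-ξ)‖ = ‖breveG g lam ξ‖)
    (hdec : ∀ lam ξ1 ξ2, 0 ≤ ξ1 → ξ1 ≤ ξ2 → ‖breveG g lam ξ2‖ ≤ ‖breveG g lam ξ1‖)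
    (c : ℝ) {a b : ℝ} (ha : 0 ≤ a) (hab : a ≤ |b|) : ‖chirpG g c b‖ ≤ ‖chirpG g c a‖ := by
  rw [chirpG_eq_breveG, chirpG_eq_breveG]
  rcases abs_choice b with hb | hb
  · exact hdec _ a b ha (hb ▸ hab)
  · rw [← heven, ← hb]
    exact hdec _ a |b| ha hab

theorem norm_sum_xcomp_mul_le (s : Finset ℕ) (A φ : ℕ → ℝ → ℝ) (t τ0 : ℝ) (z : ℕ → ℂ)
    (hA0 : ∀ k ∈ s, 0 ≤ A k t) (hz : ∀ k ∈ s, ‖z k‖ ≤ τ0) :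
    ‖∑ k ∈ s, xcomp A φ k t * z k‖ ≤ τ0 * ∑ k ∈ s, A k t := by
  rw [Finset.mul_sum]
  refine (norm_sum_le _ _).trans (Finset.sum_le_sum fun k hk => ?_)
  rw [norm_mul, norm_xcomp, abs_of_nonneg (hA0 k hk), mul_comm τ0]
  exact mul_le_mul_of_nonneg_left (hz k hk) (hA0 k hk)

theorem norm_chirpModel_le (K : ℕ) (A φ : ℕ → ℝ → ℝ) (g σ : ℝ → ℝ) (t η τ0 : ℝ)
    (hA0 : ∀ k ≤ K, 0 ≤ A k t)
    (hG : ∀ k ≤ K, ‖chirpG g (crate φ σ k t) (σ t * (η - deriv (φ k) t))‖ ≤ τ0) :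
    ‖chirpModel K A φ g σ t η‖ ≤ τ0 * Msum K A t :=
  norm_sum_xcomp_mul_le _ A φ t τ0 _
    (fun k hk => hA0 k (Finset.mem_range_succ_iff.mp hk))
    (fun k hk => hG k (Finset.mem_range_succ_iff.mp hk))

theorem norm_chirpModel_ridge_ge (K : ℕ) (A φ : ℕ → ℝ → ℝ) (g σ : ℝ → ℝ) (t τ0 : ℝ) {l : ℕ}
    (hl : l ≤ K) (hA0 : ∀ k ≤ K, 0 ≤ A k t)
    (hG : ∀ k ≤ K, k ≠ l →
      ‖chirpG g (crate φ σ k t) (σ t * (deriv (φ l) t - deriv (φ k) t))‖ ≤ τ0) :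
    A l t * ‖chirpG g (crate φ σ l t) 0‖ - τ0 * (Msum K A t - A l t)
      ≤ ‖chirpModel K A φ g σ t (deriv (φ l) t)‖ := by
  have hlK : l ∈ Finset.range (K + 1) := Finset.mem_range_succ_iff.mpr hl
  have hle : ∀ k ∈ (Finset.range (K + 1)).erase l, k ≤ K ∧ k ≠ l := fun k hk =>
    ⟨Finset.mem_range_succ_iff.mp (Finset.mem_of_mem_erase hk),
      Finset.ne_of_mem_erase hk⟩
  have hrest := norm_sum_xcomp_mul_le ((Finset.range (K + 1)).erase l) A φ t τ0 _
    (fun k hk => hA0 k (hle k hk).1) (fun k hk => hG k (hle k hk).1 (hle k hk).2)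
  rw [Finset.sum_erase_eq_sub (f := fun k => A k t) hlK] at hrest
  have hridge : ‖xcomp A φ l t * chirpG g (crate φ σ l t) 0‖
      = A l t * ‖chirpG g (crate φ σ l t) 0‖ := by
    rw [norm_mul, norm_xcomp, abs_of_nonneg (hA0 l hl)]
  rw [chirpModel, ← Finset.add_sum_erase _ _ hlK, sub_self, mul_zero, Msum]
  linarith [norm_le_add_norm_add (xcomp A φ l t * chirpG g (crate φ σ l t) 0)
    (∑ k ∈ (Finset.range (K + 1)).erase l,
      xcomp A φ k t * chirpG g (crate φ σ k t) (σ t * (deriv (φ l) t - deriv (φ k) t)))]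

theorem add_le_mul_abs_sub_of_disjoint {a b r s σ : ℝ} (hσ : 0 < σ) (hr : 0 < r) (hs : 0 < s)
    (h : Disjoint {η : ℝ | |η - a| < r / σ} {η : ℝ | |η - b| < s / σ}) :
    r + s ≤ σ * |a - b| := by
  have hballs : Disjoint (Metric.ball a (r / σ)) (Metric.ball b (s / σ)) := by
    simpa only [Metric.ball, Real.dist_eq] using h
  rw [disjoint_ball_ball_iff (div_pos hr hσ) (div_pos hs hσ), Real.dist_eq, ← add_div,
    div_le_iff₀' hσ] at hballs
  exact hballs

section Partition

variable (K : ℕ) (A φ : ℕ → ℝ → ℝ) (x : ℝ → ℂ) (g σ : ℝ → ℝ) (αf : ℕ → ℝ) (ε1 ε3 τ0 t eps : ℝ)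

theorem exists_near_ridge_of_mem_Gt
    (happ : ∀ η, ‖aSTFT x g σ t η - chirpModel K A φ g σ t η‖ ≤ Msum K A t * Pi0 g σ ε1 ε3 t)
    (hdecay : ∀ k ≤ K, ∀ ξ, αf k ≤ |ξ| → ‖chirpG g (crate φ σ k t) ξ‖ ≤ τ0)
    (hσ : 0 < σ t) (hA0 : ∀ k ≤ K, 0 ≤ A k t)
    (heps : Msum K A t * (τ0 + Pi0 g σ ε1 ε3 t) ≤ eps) {η : ℝ} (hη : η ∈ Gt x g σ t eps) :
    ∃ k ≤ K, |η - deriv (φ k) t| < αf k / σ t := by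
  by_contra! hfar
  have hmodel := norm_chirpModel_le K A φ g σ t η τ0 hA0 fun k hk => hdecay k hk _ <| by
    rw [abs_mul, abs_of_pos hσ, ← div_le_iff₀' hσ]
    exact hfar k hk
  have : ‖aSTFT x g σ t η‖ ≤ eps := by
    linarith [norm_le_norm_sub_add (aSTFT x g σ t η) (chirpModel K A φ g σ t η), happ η]
  exact (not_lt.2 this) hη

theorem deriv_mem_Gt
    (happ : ∀ η, ‖aSTFT x g σ t η - chirpModel K A φ g σ t η‖ ≤ Msum K A t * Pi0 g σ ε1 ε3 t)
    (hdecay : ∀ k ≤ K, ∀ ξ, αf k ≤ |ξ| → ‖chirpG g (crate φ σ k t) ξ‖ ≤ τ0)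
    (hA : ∀ k ≤ K, 0 < A k t) (hτ0 : 0 < τ0)
    (heps : eps ≤ g0min K g φ σ t * muMin K A t - Msum K A t * (τ0 + Pi0 g σ ε1 ε3 t))
    (hσ : 0 < σ t) (hα : ∀ k ≤ K, 0 < αf k) {l : ℕ} (hl : l ≤ K)
    (hdisj : ∀ k ≤ K, k ≠ l → Disjoint {η : ℝ | |η - deriv (φ k) t| < αf k / σ t}
        {η : ℝ | |η - deriv (φ l) t| < αf l / σ t}) :
    deriv (φ l) t ∈ Gt x g σ t eps := by
  have hlK : l ∈ Finset.range (K + 1) := Finset.mem_range_succ_iff.mpr hl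
  have hsep : ∀ k ≤ K, k ≠ l → αf k ≤ |σ t * (deriv (φ l) t - deriv (φ k) t)| := by
    intro k hk hkl
    have := add_le_mul_abs_sub_of_disjoint hσ (hα k hk) (hα l hl) (hdisj k hk hkl)
    rw [abs_mul, abs_of_pos hσ, abs_sub_comm]
    linarith [hα l hl]
  have hridge := norm_chirpModel_ridge_ge K A φ g σ t τ0 hl (fun k hk => (hA k hk).le)
    fun k hk hkl => hdecay k hk _ (hsep k hk hkl)
  have hg0 : g0min K g φ σ t ≤ ‖chirpG g (crate φ σ l t) 0‖ := Finset.inf'_le _ hlK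
  have hμ : muMin K A t ≤ A l t := Finset.inf'_le _ hlK
  have hμ0 : 0 < muMin K A t := (Finset.lt_inf'_iff _).2 fun k hk =>
    hA k (Finset.mem_range_succ_iff.mp hk)
  have hg0μ := mul_le_mul hg0 hμ hμ0.le (norm_nonneg _)
  show eps < ‖aSTFT x g σ t (deriv (φ l) t)‖
  linarith [mul_pos hτ0 (hA l hl), norm_sub_norm_le (chirpModel K A φ g σ t (deriv (φ l) t))
    (aSTFT x g σ t (deriv (φ l) t)), norm_sub_rev (chirpModel K A φ g σ t (deriv (φ l) t))
    (aSTFT x g σ t (deriv (φ l) t)), happ (deriv (φ l) t)]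

end Partition

theorem thm3_1a_general (K : ℕ) (A φ : ℕ → ℝ → ℝ) (ε1 ε3 : ℝ) (x : ℝ → ℂ)
    (g : ℝ → ℝ) (σ : ℝ → ℝ) (αf : ℕ → ℝ) (τ0 t epst : ℝ)
    (hε3 : 0 < ε3)
    (hAreg : ∀ k ≤ K, ContDiff ℝ 1 (A k))
    (hφreg : ∀ k ≤ K, ContDiff ℝ 3 (φ k))
    (hφ0 : ∀ s, φ 0 s = 0)
    (hApos : ∀ k ≤ K, ∀ s, 0 < A k s)
    (hAlip : ∀ k ≤ K, ∀ s τ, |A k (s + τ) - A k s| ≤ ε1 * |τ| * A k s)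
    (hφthird : ∀ k, 1 ≤ k → k ≤ K → ∀ s, |deriv (deriv (deriv (φ k))) s| ≤ ε3)
    (hx : ∀ s, x s = ∑ k ∈ Finset.range (K + 1), xcomp A φ k s)
    (hgint : Integrable g)
    (hgI1 : Integrable fun τ : ℝ => τ * g τ)
    (hgI3 : Integrable fun τ : ℝ => τ ^ 3 * g τ)
    (hadm_even : ∀ lam ξ, ‖breveG g lam (-ξ)‖ = ‖breveG g lam ξ‖)
    (hadm_dec : ∀ lam ξ1 ξ2, 0 ≤ ξ1 → ξ1 ≤ ξ2 → ‖breveG g lam ξ2‖ ≤ ‖breveG g lam ξ1‖)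
    (hσ : ∀ s, 0 < σ s)
    (hτ0 : 0 < τ0)
    (hξk : ∀ k ≤ K, ∃ ξk, 0 < ξk ∧ ‖chirpG g (crate φ σ k t) ξk‖ = τ0 ∧ ξk ≤ αf k)
    (hdisj : ∀ k ≤ K, ∀ l ≤ K, k ≠ l →
      Disjoint {η : ℝ | |η - deriv (φ k) t| < αf k / σ t}
        {η : ℝ | |η - deriv (φ l) t| < αf l / σ t})
    (heps1 : Msum K A t * (τ0 + Pi0 g σ ε1 ε3 t) ≤ epst)
    (heps2 : epst ≤ g0min K g φ σ t * muMin K A t - Msum K A t * (τ0 + Pi0 g σ ε1 ε3 t))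
    :
    (Gt x g σ t epst = ⋃ k ∈ Finset.range (K + 1), Htk x g σ φ αf t epst k) ∧
    (∀ k ≤ K, ∀ l ≤ K, k ≠ l →
      Disjoint (Htk x g σ φ αf t epst k) (Htk x g σ φ αf t epst l)) ∧
    (∀ k ≤ K, deriv (φ k) t ∈ Htk x g σ φ αf t epst k) := by
  have hσt := hσ t
  have hαpos : ∀ k ≤ K, 0 < αf k := fun k hk => by
    obtain ⟨ξk, hξ, -, hξα⟩ := hξk k hk; linarith
  have hdecay : ∀ k ≤ K, ∀ ξ, αf k ≤ |ξ| → ‖chirpG g (crate φ σ k t) ξ‖ ≤ τ0 := by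
    intro k hk ξ hξ
    obtain ⟨ξk, hξk0, hGξk, hξα⟩ := hξk k hk
    exact hGξk ▸ norm_chirpG_le_of_le_abs g hadm_even hadm_dec _ hξk0.le (hξα.trans hξ)
  have hφ''' : ∀ k ≤ K, ∀ s, |deriv (deriv (deriv (φ k))) s| ≤ ε3 := by
    intro k hk s
    rcases Nat.eq_zero_or_pos k with rfl | hk0
    · simpa [funext hφ0] using hε3.le
    · exact hφthird k hk0 hk s
  have happ : ∀ η, ‖aSTFT x g σ t η - chirpModel K A φ g σ t η‖
      ≤ Msum K A t * Pi0 g σ ε1 ε3 t := fun η =>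
    norm_aSTFT_sub_chirpModel_le K A φ x g σ ε1 ε3 t η hσt (fun k hk => (hAreg k hk).continuous)
      (fun k hk => (hφreg k hk).continuous) (fun k hk => (hApos k hk t).le)
      (fun k hk => hAlip k hk t)
      (fun k hk => abs_taylor_two_remainder_le (hφreg k hk) (hφ''' k hk) t) hx hgint hgI1 hgI3
  refine ⟨Set.Subset.antisymm (fun η hη => ?_) (Set.iUnion₂_subset fun k _ η hη => hη.1),
    fun k hk l hl hkl => (hdisj k hk l hl hkl).mono (fun _ h => h.2) (fun _ h => h.2),
    fun l hl => ⟨deriv_mem_Gt K A φ x g σ αf ε1 ε3 τ0 t epst happ hdecay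
      (fun k hk => hApos k hk t) hτ0 heps2 hσt hαpos hl (fun k hk hkl => hdisj k hk l hl hkl),
      by simpa using div_pos (hαpos l hl) hσt⟩⟩
  obtain ⟨k, hk, hnear⟩ := exists_near_ridge_of_mem_Gt K A φ x g σ αf ε1 ε3 τ0 t epst happ hdecay
    hσt (fun k hk => (hApos k hk t).le) heps1 hη
  exact Set.mem_biUnion (Finset.mem_range_succ_iff.mpr hk) ⟨hη, hnear⟩

theorem thm3_1a (K : ℕ) (A φ : ℕ → ℝ → ℝ) (ε1 ε3 : ℝ) (x : ℝ → ℂ)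
    (g : ℝ → ℝ) (σ : ℝ → ℝ) (αf : ℕ → ℝ) (τ0 t epst : ℝ)
    (hε1 : 0 < ε1) (hε3 : 0 < ε3)
    (hAreg : ∀ k ≤ K, ContDiff ℝ 1 (A k))
    (hAbdd : ∀ k ≤ K, ∃ C, ∀ s, |A k s| ≤ C)
    (hφreg : ∀ k ≤ K, ContDiff ℝ 3 (φ k))
    (hφ0 : ∀ s, φ 0 s = 0)
    (hApos : ∀ k ≤ K, ∀ s, 0 < A k s)
    (hφ'pos : ∀ k, 1 ≤ k → k ≤ K → ∃ c > 0, ∀ s, c ≤ deriv (φ k) s)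
    (hφ'bdd : ∀ k, 1 ≤ k → k ≤ K → ∃ C, ∀ s, deriv (φ k) s ≤ C)
    (hfreq : ∃ d > 0, ∀ k, 2 ≤ k → k ≤ K → ∀ s, d ≤ deriv (φ k) s - deriv (φ (k - 1)) s)
    (hAlip : ∀ k ≤ K, ∀ s τ, |A k (s + τ) - A k s| ≤ ε1 * |τ| * A k s)
    (hφ''bdd : ∀ k ≤ K, ∃ C, ∀ s, |deriv (deriv (φ k)) s| ≤ C)
    (hφthird : ∀ k, 1 ≤ k → k ≤ K → ∀ s, |deriv (deriv (deriv (φ k))) s| ≤ ε3)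
    (hx : ∀ s, x s = ∑ k ∈ Finset.range (K + 1), xcomp A φ k s)
    (hgint : Integrable g)
    (hgL2 : MemLp g 2 (volume : Measure ℝ))
    (hgI1 : Integrable fun τ : ℝ => τ * g τ)
    (hgI3 : Integrable fun τ : ℝ => τ ^ 3 * g τ)
    (hgnorm : (∫ τ : ℝ, g τ) = 1)
    (hadm_even : ∀ lam ξ, ‖breveG g lam (-ξ)‖ = ‖breveG g lam ξ‖)
    (hadm_dec : ∀ lam ξ1 ξ2, 0 ≤ ξ1 → ξ1 ≤ ξ2 → ‖breveG g lam ξ2‖ ≤ ‖breveG g lam ξ1‖)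
    (hσ : ∀ s, 0 < σ s)
    (hτ0 : 0 < τ0) (hτ0' : τ0 < 1)
    (hξk : ∀ k ≤ K, ∃ ξk, 0 < ξk ∧ ‖chirpG g (crate φ σ k t) ξk‖ = τ0 ∧ ξk ≤ αf k)
    (hdisj : ∀ k ≤ K, ∀ l ≤ K, k ≠ l →
      Disjoint {η : ℝ | |η - deriv (φ k) t| < αf k / σ t}
        {η : ℝ | |η - deriv (φ l) t| < αf l / σ t})
    (hErrsmall : ∀ l ≤ K,
      ErrL K A φ g σ αf ε1 ε3 l t < 1 / 2 * ‖chirpG g (crate φ σ l t) 0‖ * A l t)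
    (hmain : 2 * Msum K A t * (τ0 + Pi0 g σ ε1 ε3 t) ≤ g0min K g φ σ t * muMin K A t)
    (heps1 : Msum K A t * (τ0 + Pi0 g σ ε1 ε3 t) ≤ epst)
    (heps2 : epst ≤ g0min K g φ σ t * muMin K A t - Msum K A t * (τ0 + Pi0 g σ ε1 ε3 t))
    :
    (Gt x g σ t epst = ⋃ k ∈ Finset.range (K + 1), Htk x g σ φ αf t epst k) ∧
    (∀ k ≤ K, ∀ l ≤ K, k ≠ l →
      Disjoint (Htk x g σ φ αf t epst k) (Htk x g σ φ αf t epst l)) ∧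
    (∀ k ≤ K, deriv (φ k) t ∈ Htk x g σ φ αf t epst k) :=
  thm3_1a_general K A φ ε1 ε3 x g σ αf τ0 t epst hε3 hAreg hφreg hφ0 hApos hAlip hφthird hx hgint
    hgI1 hgI3 hadm_even hadm_dec hσ hτ0 hξk hdisj heps1 heps2
end
end
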